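/- Under the hypotheses of the Jacobi transform, the Jacobi transform respects Poisson brackets: the transform of {K, L} equals {K̂, L̂}, where K, L are polynomial-in-momenta constants of the motion for H₀ + U with U nowhere vanishing and K̂, L̂ their Jacobi transforms at parameter E. -/

import Mathlib

open Finset

/-- Canonical Poisson bracket on phase space ℝ²ⁿ = (Fin n → ℝ) × (Fin n → ℝ). -/
noncomputable def pb {n : ℕ} (f g : (Fin n → ℝ) × (Fin n → ℝ) → ℝ) :
    (Fin n → ℝ) × (Fin n → ℝ) → ℝ := fun z =>
  ∑ j : Fin n,
    (fderiv ℝ f z ((Pi.single j 1 : Fin n → ℝ), 0) * fderiv ℝ g z (0, (Pi.single j 1 : Fin n → ℝ)) -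
     fderiv ℝ f z (0, (Pi.single j 1 : Fin n → ℝ)) * fderiv ℝ g z ((Pi.single j 1 : Fin n → ℝ), 0))



namespace PBaux

variable {n : ℕ} {f g h : (Fin n → ℝ) × (Fin n → ℝ) → ℝ} {z : (Fin n → ℝ) × (Fin n → ℝ)}

lemma pb_antisymm (f g : (Fin n → ℝ) × (Fin n → ℝ) → ℝ) (z) : pb f g z = - pb g f z := by
  simp only [pb, ← Finset.sum_neg_distrib]
  exact Finset.sum_congr rfl fun j _ => by ring

lemma pb_zero_left : pb (fun _ => (0:ℝ)) g z = 0 := by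
  simp [pb, fderiv_const]

lemma pb_sum_left {ι : Type*} (s : Finset ι) (F : ι → (Fin n → ℝ) × (Fin n → ℝ) → ℝ)
    (hF : ∀ i ∈ s, DifferentiableAt ℝ (F i) z) :
    pb (fun w => ∑ i ∈ s, F i w) g z = ∑ i ∈ s, pb (F i) g z := by
  simp only [pb, fderiv_fun_sum hF, ContinuousLinearMap.coe_sum', Finset.sum_apply,
    Finset.sum_mul, Finset.sum_sub_distrib]
  exact congrArg₂ (· - ·) Finset.sum_comm Finset.sum_comm

lemma pb_sum_right {ι : Type*} (s : Finset ι) (F : ι → (Fin n → ℝ) × (Fin n → ℝ) → ℝ)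
    (hF : ∀ i ∈ s, DifferentiableAt ℝ (F i) z) :
    pb f (fun w => ∑ i ∈ s, F i w) z = ∑ i ∈ s, pb f (F i) z := by
  rw [pb_antisymm, pb_sum_left s F hF,
    show (∑ i ∈ s, pb f (F i) z) = ∑ i ∈ s, -pb (F i) f z from
      Finset.sum_congr rfl fun i _ => pb_antisymm f (F i) z,
    Finset.sum_neg_distrib]

lemma pb_mul_left (hf : DifferentiableAt ℝ f z) (hg : DifferentiableAt ℝ g z) :
    pb (fun w => f w * g w) h z = f z * pb g h z + g z * pb f h z := by
  simp only [pb, fderiv_fun_mul hf hg, ContinuousLinearMap.add_apply,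
    ContinuousLinearMap.coe_smul', Pi.smul_apply, smul_eq_mul, Finset.mul_sum,
    ← Finset.sum_add_distrib]
  exact Finset.sum_congr rfl fun j _ => by ring

lemma pb_mul_right (hf : DifferentiableAt ℝ f z) (hg : DifferentiableAt ℝ g z) :
    pb h (fun w => f w * g w) z = f z * pb h g z + g z * pb h f z := by
  rw [pb_antisymm, pb_mul_left hf hg, pb_antisymm g h, pb_antisymm f h]; ring

lemma pb_pow_left (m : ℕ) (hf : DifferentiableAt ℝ f z) :
    pb (fun w => f w ^ m) g z = (m:ℝ) * f z ^ (m-1) * pb f g z := by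
  induction m with
  | zero => simp only [pow_zero, Nat.cast_zero, zero_mul]; simpa [pb] using pb_zero_left (g := g) (z := z)
  | succ m ih =>
    have : (fun w => f w ^ (m+1)) = fun w => f w * f w ^ m := by
      funext w; ring
    rw [this, pb_mul_left (g := fun w => f w ^ m) hf (hf.pow m), ih]
    cases m with
    | zero => simp
    | succ k => simp only [Nat.succ_sub_one]; push_cast; ring

lemma pb_pow_right (m : ℕ) (hf : DifferentiableAt ℝ f z) :
    pb g (fun w => f w ^ m) z = (m:ℝ) * f z ^ (m-1) * pb g f z := by
  rw [pb_antisymm, pb_pow_left m hf, pb_antisymm f g]; ring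

lemma pb_self (f : (Fin n → ℝ) × (Fin n → ℝ) → ℝ) (z) : pb f f z = 0 := by
  have := pb_antisymm f f z; linarith

lemma pb_neg_right : pb f (fun w => -g w) z = - pb f g z := by
  simp only [pb, fderiv_fun_neg, ContinuousLinearMap.neg_apply, ← Finset.sum_neg_distrib]
  exact Finset.sum_congr rfl fun j _ => by ring

lemma pb_sub_const_right (c : ℝ) (hg : DifferentiableAt ℝ g z) :
    pb f (fun w => g w - c) z = pb f g z := by
  have : fderiv ℝ (fun w => g w - c) z = fderiv ℝ g z := by
    rw [fderiv_sub_const]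
  simp only [pb, this]

lemma pb_const_sub_right (c : ℝ) (hg : DifferentiableAt ℝ g z) :
    pb f (fun w => c - g w) z = - pb f g z := by
  have : (fun w => c - g w) = fun w => -(g w - c) := by funext w; ring
  rw [this, pb_neg_right, pb_sub_const_right c hg]


lemma pb_add_right (hf : DifferentiableAt ℝ f z) (hg : DifferentiableAt ℝ g z) :
    pb h (fun w => f w + g w) z = pb h f z + pb h g z := by
  simp only [pb, fderiv_fun_add hf hg, ContinuousLinearMap.add_apply, ← Finset.sum_add_distrib]
  exact Finset.sum_congr rfl fun j _ => by ring

lemma pb_zero_left' : pb (0 : (Fin n → ℝ) × (Fin n → ℝ) → ℝ) g z = 0 := by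
  have : (0 : (Fin n → ℝ) × (Fin n → ℝ) → ℝ) = fun _ => (0:ℝ) := rfl
  rw [this]; exact pb_zero_left

lemma pb_zero_right' : pb g (0 : (Fin n → ℝ) × (Fin n → ℝ) → ℝ) z = 0 := by
  rw [pb_antisymm, pb_zero_left']; simp

lemma fderiv_homog (f : (Fin n → ℝ) × (Fin n → ℝ) → ℝ) (hf : Differentiable ℝ f) (d : ℕ)
    (hfh : ∀ (x p : Fin n → ℝ) (a : ℝ), f (x, a • p) = a ^ d * f (x, p))
    (a : ℝ) (x p v w : Fin n → ℝ) :
    fderiv ℝ f (x, a • p) (v, a • w) = a ^ d * fderiv ℝ f (x, p) (v, w) := by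
  set L : ((Fin n → ℝ) × (Fin n → ℝ)) →L[ℝ] ((Fin n → ℝ) × (Fin n → ℝ)) :=
    (ContinuousLinearMap.id ℝ (Fin n → ℝ)).prodMap (a • ContinuousLinearMap.id ℝ (Fin n → ℝ))
      with hL
  have hLap : ∀ q r : Fin n → ℝ, L (q, r) = (q, a • r) := by
    intro q r; simp [hL]
  have hcomp : (fun z : (Fin n → ℝ) × (Fin n → ℝ) => a ^ d * f z) = f ∘ L := by
    funext z
    have : L z = (z.1, a • z.2) := hLap z.1 z.2
    simp only [Function.comp, this]
    exact (hfh z.1 z.2 a).symm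
  have h1 : fderiv ℝ (fun z : (Fin n → ℝ) × (Fin n → ℝ) => a ^ d * f z) (x, p)
      = a ^ d • fderiv ℝ f (x, p) := fderiv_const_mul (hf (x, p)) _
  have h2 : fderiv ℝ (f ∘ L) (x, p) = (fderiv ℝ f (L (x, p))).comp L := by
    rw [fderiv_comp (x, p) (hf _) L.differentiableAt, L.fderiv]
  have h3 := h2.symm.trans (hcomp ▸ h1)
  have h4 := congrArg (fun (T : ((Fin n → ℝ) × (Fin n → ℝ)) →L[ℝ] ℝ) => T (v, w)) h3
  simp only [ContinuousLinearMap.comp_apply, hLap, ContinuousLinearMap.coe_smul',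
    Pi.smul_apply, smul_eq_mul] at h4
  exact h4
lemma pb_homog (f g : (Fin n → ℝ) × (Fin n → ℝ) → ℝ)
    (hf : Differentiable ℝ f) (hg : Differentiable ℝ g) (d e : ℕ)
    (hfh : ∀ (x p : Fin n → ℝ) (a : ℝ), f (x, a • p) = a ^ d * f (x, p))
    (hgh : ∀ (x p : Fin n → ℝ) (a : ℝ), g (x, a • p) = a ^ e * g (x, p))
    (a : ℝ) (x p : Fin n → ℝ) :
    a * pb f g (x, a • p) = a ^ (d + e) * pb f g (x, p) := by
  simp only [pb, Finset.mul_sum]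
  refine Finset.sum_congr rfl fun j _ => ?_
  have hfx : fderiv ℝ f (x, a • p) ((Pi.single j 1 : Fin n → ℝ), 0)
      = a ^ d * fderiv ℝ f (x, p) ((Pi.single j 1 : Fin n → ℝ), 0) := by
    have := fderiv_homog f hf d hfh a x p (Pi.single j 1) 0
    simpa using this
  have hgx : fderiv ℝ g (x, a • p) ((Pi.single j 1 : Fin n → ℝ), 0)
      = a ^ e * fderiv ℝ g (x, p) ((Pi.single j 1 : Fin n → ℝ), 0) := by
    have := fderiv_homog g hg e hgh a x p (Pi.single j 1) 0
    simpa using this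
  have hfp : a * fderiv ℝ f (x, a • p) (0, (Pi.single j 1 : Fin n → ℝ))
      = a ^ d * fderiv ℝ f (x, p) (0, (Pi.single j 1 : Fin n → ℝ)) := by
    have h := fderiv_homog f hf d hfh a x p 0 (Pi.single j 1)
    rw [show ((0 : Fin n → ℝ), a • (Pi.single j 1 : Fin n → ℝ))
        = a • ((0 : Fin n → ℝ), (Pi.single j 1 : Fin n → ℝ)) by simp [Prod.smul_mk],
      ContinuousLinearMap.map_smul] at h
    simpa using h
  have hgp : a * fderiv ℝ g (x, a • p) (0, (Pi.single j 1 : Fin n → ℝ))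
      = a ^ e * fderiv ℝ g (x, p) (0, (Pi.single j 1 : Fin n → ℝ)) := by
    have h := fderiv_homog g hg e hgh a x p 0 (Pi.single j 1)
    rw [show ((0 : Fin n → ℝ), a • (Pi.single j 1 : Fin n → ℝ))
        = a • ((0 : Fin n → ℝ), (Pi.single j 1 : Fin n → ℝ)) by simp [Prod.smul_mk],
      ContinuousLinearMap.map_smul] at h
    simpa using h
  calc a * (fderiv ℝ f (x, a • p) ((Pi.single j 1 : Fin n → ℝ), 0) *
        fderiv ℝ g (x, a • p) (0, (Pi.single j 1 : Fin n → ℝ)) -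
      fderiv ℝ f (x, a • p) (0, (Pi.single j 1 : Fin n → ℝ)) *
        fderiv ℝ g (x, a • p) ((Pi.single j 1 : Fin n → ℝ), 0))
      = fderiv ℝ f (x, a • p) ((Pi.single j 1 : Fin n → ℝ), 0) *
          (a * fderiv ℝ g (x, a • p) (0, (Pi.single j 1 : Fin n → ℝ))) -
        (a * fderiv ℝ f (x, a • p) (0, (Pi.single j 1 : Fin n → ℝ))) *
          fderiv ℝ g (x, a • p) ((Pi.single j 1 : Fin n → ℝ), 0) := by ring
    _ = a ^ d * fderiv ℝ f (x, p) ((Pi.single j 1 : Fin n → ℝ), 0) *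
          (a ^ e * fderiv ℝ g (x, p) (0, (Pi.single j 1 : Fin n → ℝ))) -
        a ^ d * fderiv ℝ f (x, p) (0, (Pi.single j 1 : Fin n → ℝ)) *
          (a ^ e * fderiv ℝ g (x, p) ((Pi.single j 1 : Fin n → ℝ), 0)) := by
        rw [hfx, hgx, hfp, hgp]
    _ = a ^ (d + e) * (fderiv ℝ f (x, p) ((Pi.single j 1 : Fin n → ℝ), 0) *
          fderiv ℝ g (x, p) (0, (Pi.single j 1 : Fin n → ℝ)) -
        fderiv ℝ f (x, p) (0, (Pi.single j 1 : Fin n → ℝ)) *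
          fderiv ℝ g (x, p) ((Pi.single j 1 : Fin n → ℝ), 0)) := by
        rw [pow_add]; ring

end PBaux

open PBaux

lemma graded {n N : ℕ}
    (g : (Fin n → ℝ) → Fin n → Fin n → ℝ) (u : (Fin n → ℝ) → ℝ)
    (Kc : ℕ → (Fin n → ℝ) × (Fin n → ℝ) → ℝ)
    (hg : ∀ i j, ContDiff ℝ (⊤ : ℕ∞) fun x => g x i j)
    (hu : ContDiff ℝ (⊤ : ℕ∞) u)
    (hKc : ∀ j, ContDiff ℝ (⊤ : ℕ∞) (Kc j))
    (hKzero : ∀ j, N / 2 < j → Kc j = 0)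
    (hKhom : ∀ j ≤ N / 2, ∀ (x p : Fin n → ℝ) (a : ℝ),
      Kc j (x, a • p) = a ^ (N - 2 * j) * Kc j (x, p))
    (hKsym : ∀ z, pb (fun w => ∑ j ∈ range (N / 2 + 1), Kc j w)
      (fun w => (∑ i : Fin n, ∑ j : Fin n, g w.1 i j * w.2 i * w.2 j) + u w.1) z = 0) :
    (∀ z, pb (Kc 0) (fun w => ∑ i : Fin n, ∑ j : Fin n, g w.1 i j * w.2 i * w.2 j) z = 0) ∧
    (∀ j z, pb (Kc (j+1)) (fun w => ∑ i : Fin n, ∑ j : Fin n, g w.1 i j * w.2 i * w.2 j) z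
      + pb (Kc j) (fun w => u w.1) z = 0) := by
  set H0 : (Fin n → ℝ) × (Fin n → ℝ) → ℝ :=
    fun w => ∑ i : Fin n, ∑ j : Fin n, g w.1 i j * w.2 i * w.2 j with hH0
  set U : (Fin n → ℝ) × (Fin n → ℝ) → ℝ := fun w => u w.1 with hU
  have hsnd : ∀ i : Fin n, ContDiff ℝ (⊤ : ℕ∞) (fun w : (Fin n → ℝ) × (Fin n → ℝ) => w.2 i) :=
    fun i => ((ContinuousLinearMap.proj (R := ℝ) (φ := fun _ : Fin n => ℝ) i).comp
      (ContinuousLinearMap.snd ℝ (Fin n → ℝ) (Fin n → ℝ))).contDiff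
  have hH0c : ContDiff ℝ (⊤ : ℕ∞) H0 := by
    refine ContDiff.sum fun i _ => ContDiff.sum fun k _ => ?_
    exact (((hg i k).comp contDiff_fst).mul (hsnd i)).mul (hsnd k)
  have hH0d : Differentiable ℝ H0 := hH0c.differentiable (by simp)
  have hUc : ContDiff ℝ (⊤ : ℕ∞) U := hu.comp contDiff_fst
  have hUd : Differentiable ℝ U := hUc.differentiable (by simp)
  have hKd : ∀ j, Differentiable ℝ (Kc j) := fun j => (hKc j).differentiable (by simp)
  have hH0hom : ∀ (x p : Fin n → ℝ) (a : ℝ), H0 (x, a • p) = a ^ 2 * H0 (x, p) := by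
    intro x p a
    show (∑ i : Fin n, ∑ k : Fin n, g x i k * (a • p) i * (a • p) k)
      = a ^ 2 * ∑ i : Fin n, ∑ k : Fin n, g x i k * p i * p k
    simp only [Finset.mul_sum, Pi.smul_apply, smul_eq_mul]
    exact Finset.sum_congr rfl fun i _ => Finset.sum_congr rfl fun k _ => by ring
  have hUhom : ∀ (x p : Fin n → ℝ) (a : ℝ), U (x, a • p) = a ^ 0 * U (x, p) := by
    intro x p a; show u x = a ^ 0 * u x; rw [pow_zero, one_mul]
  have key : ∀ (x p : Fin n → ℝ) (e : ℕ),
      (∑ j ∈ range (N/2+1), (if N - 2*j + 2 = e then pb (Kc j) H0 (x,p) else 0))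
      + (∑ j ∈ range (N/2+1), (if N - 2*j = e then pb (Kc j) U (x,p) else 0)) = 0 := by
    intro x p e
    set P : Polynomial ℝ := ∑ j ∈ range (N/2+1),
      (Polynomial.monomial (N - 2*j + 2) (pb (Kc j) H0 (x,p))
        + Polynomial.monomial (N - 2*j) (pb (Kc j) U (x,p))) with hP
    have heval : ∀ a : ℝ, P.eval a = 0 := by
      intro a
      have hsplit : pb (fun w => ∑ j ∈ range (N / 2 + 1), Kc j w)
          (fun w => H0 w + U w) (x, a • p)
          = ∑ j ∈ range (N/2+1), (pb (Kc j) H0 (x, a•p) + pb (Kc j) U (x, a•p)) := by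
        rw [pb_sum_left _ _ (fun j _ => (hKd j) _)]
        exact Finset.sum_congr rfl fun j _ => pb_add_right (hH0d _) (hUd _)
      have h0 := hKsym (x, a • p)
      rw [hsplit] at h0
      have hPe : P.eval a
          = a * ∑ j ∈ range (N/2+1), (pb (Kc j) H0 (x, a•p) + pb (Kc j) U (x, a•p)) := by
        rw [Finset.mul_sum, hP]
        simp only [Polynomial.eval_finset_sum, Polynomial.eval_add, Polynomial.eval_monomial]
        refine Finset.sum_congr rfl fun j hj => ?_
        have hj' : j ≤ N/2 := Nat.lt_succ_iff.mp (mem_range.mp hj)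
        have h1 : a * pb (Kc j) H0 (x, a • p) = a ^ (N - 2*j + 2) * pb (Kc j) H0 (x, p) :=
          pb_homog (Kc j) H0 (hKd j) hH0d (N - 2*j) 2 (hKhom j hj') hH0hom a x p
        have h2 : a * pb (Kc j) U (x, a • p) = a ^ (N - 2*j) * pb (Kc j) U (x, p) := by
          have := pb_homog (Kc j) U (hKd j) hUd (N - 2*j) 0 (hKhom j hj') hUhom a x p
          simpa using this
        rw [mul_add, h1, h2]; ring
      rw [hPe, h0, mul_zero]
    have hP0 : P = 0 := Polynomial.funext fun r => by rw [heval r, Polynomial.eval_zero]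
    have hc := congrArg (fun q => Polynomial.coeff q e) hP0
    simpa [hP, Polynomial.finset_sum_coeff, Polynomial.coeff_add, Polynomial.coeff_monomial,
      Finset.sum_add_distrib] using hc
  constructor
  · intro z
    obtain ⟨x, p⟩ := z
    have h := key x p (N + 2)
    have e2 : (∑ j ∈ range (N/2+1), (if N - 2*j = N + 2 then pb (Kc j) U (x,p) else 0)) = 0 :=
      Finset.sum_eq_zero fun j hj => if_neg (by have := mem_range.mp hj; omega)
    have e1 : (∑ j ∈ range (N/2+1), (if N - 2*j + 2 = N + 2 then pb (Kc j) H0 (x,p) else 0))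
        = pb (Kc 0) H0 (x,p) := by
      rw [Finset.sum_eq_single_of_mem 0 (mem_range.mpr (by omega))
        (fun j hj hne => if_neg (by have := mem_range.mp hj; omega))]
      rw [if_pos (by omega)]
    rw [e1, e2, add_zero] at h
    exact h
  · intro j z
    obtain ⟨x, p⟩ := z
    by_cases hj1 : j + 1 ≤ N/2
    · have h := key x p (N - 2*(j+1) + 2)
      have e1 : (∑ j' ∈ range (N/2+1),
          (if N - 2*j' + 2 = N - 2*(j+1) + 2 then pb (Kc j') H0 (x,p) else 0))
          = pb (Kc (j+1)) H0 (x,p) := by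
        rw [Finset.sum_eq_single_of_mem (j+1) (mem_range.mpr (by omega))
          (fun j' hj' hne => if_neg (by have := mem_range.mp hj'; omega))]
        rw [if_pos rfl]
      have e2 : (∑ j' ∈ range (N/2+1),
          (if N - 2*j' = N - 2*(j+1) + 2 then pb (Kc j') U (x,p) else 0))
          = pb (Kc j) U (x,p) := by
        rw [Finset.sum_eq_single_of_mem j (mem_range.mpr (by omega))
          (fun j' hj' hne => if_neg (by have := mem_range.mp hj'; omega))]
        rw [if_pos (by omega)]
      rw [e1, e2] at h
      exact h
    · by_cases hj2 : j ≤ N/2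
      · have hjeq : j = N/2 := by omega
        have hA : Kc (j+1) = 0 := hKzero _ (by omega)
        have h := key x p (N - 2*j)
        have e1 : (∑ j' ∈ range (N/2+1),
            (if N - 2*j' + 2 = N - 2*j then pb (Kc j') H0 (x,p) else 0)) = 0 :=
          Finset.sum_eq_zero fun j' hj' => if_neg (by have := mem_range.mp hj'; omega)
        have e2 : (∑ j' ∈ range (N/2+1),
            (if N - 2*j' = N - 2*j then pb (Kc j') U (x,p) else 0))
            = pb (Kc j) U (x,p) := by
          rw [Finset.sum_eq_single_of_mem j (mem_range.mpr (by omega))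
            (fun j' hj' hne => if_neg (by have := mem_range.mp hj'; omega))]
          rw [if_pos rfl]
        rw [e1, e2, zero_add] at h
        rw [hA, pb_zero_left', zero_add]
        exact h
      · have hA : Kc (j+1) = 0 := hKzero _ (by omega)
        have hB : Kc j = 0 := hKzero _ (by omega)
        rw [hA, hB, pb_zero_left', pb_zero_left', add_zero]
lemma triangle_sum (J1 J2 : ℕ) (f : ℕ → ℕ → ℝ)
    (h1 : ∀ j k, J1 < j → f j k = 0) (h2 : ∀ j k, J2 < k → f j k = 0) :
    ∑ m ∈ range (J1 + J2 + 1), ∑ j ∈ range (m + 1), f j (m - j)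
      = ∑ j ∈ range (J1 + 1), ∑ k ∈ range (J2 + 1), f j k := by
  set T := J1 + J2 + 1 with hT
  have step1 : ∑ j ∈ range (J1 + 1), ∑ k ∈ range (J2 + 1), f j k
      = ∑ j ∈ range T, ∑ k ∈ range T, f j k := by
    calc ∑ j ∈ range (J1 + 1), ∑ k ∈ range (J2 + 1), f j k
        = ∑ j ∈ range (J1 + 1), ∑ k ∈ range T, f j k :=
          Finset.sum_congr rfl fun j _ =>
            Finset.sum_subset (Finset.range_subset_range.mpr (by omega))
              (fun k _ hk' => h2 j k (by simp only [mem_range] at hk'; omega))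
      _ = ∑ j ∈ range T, ∑ k ∈ range T, f j k :=
          Finset.sum_subset (Finset.range_subset_range.mpr (by omega))
            (fun j _ hj' => Finset.sum_eq_zero fun k _ =>
              h1 j k (by simp only [mem_range] at hj'; omega))
  have step2 : ∑ j ∈ range T, ∑ k ∈ range T, f j k
      = ∑ q ∈ ((range T) ×ˢ (range T)).filter (fun q => q.1 + q.2 < T), f q.1 q.2 := by
    rw [Finset.sum_filter_of_ne, Finset.sum_product]
    rintro ⟨j, k⟩ hq hne
    by_contra hc
    simp only [not_lt] at hc
    rcases (by omega : J1 < j ∨ J2 < k) with h | h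
    · exact hne (h1 j k h)
    · exact hne (h2 j k h)
  have step3 : ∑ m ∈ range T, ∑ j ∈ range (m + 1), f j (m - j)
      = ∑ q ∈ ((range T) ×ˢ (range T)).filter (fun q => q.1 + q.2 < T), f q.1 q.2 := by
    rw [Finset.sum_sigma' (range T) (fun m => range (m+1)) (fun m j => f j (m - j))]
    refine Finset.sum_nbij' (fun q => (q.2, q.1 - q.2)) (fun q => ⟨q.1 + q.2, q.1⟩)
      ?_ ?_ ?_ ?_ ?_
    · rintro ⟨m, j⟩ hq
      simp only [Finset.mem_sigma, mem_range] at hq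
      simp only [mem_filter, mem_product, mem_range]
      omega
    · rintro ⟨j, k⟩ hq
      simp only [mem_filter, mem_product, mem_range] at hq
      simp only [Finset.mem_sigma, mem_range]
      omega
    · rintro ⟨m, j⟩ hq
      simp only [Finset.mem_sigma, mem_range] at hq
      have hjm : j + (m - j) = m := by omega
      simp only [hjm]
    · rintro ⟨j, k⟩ hq
      simp only [mem_filter, mem_product, mem_range] at hq
      have hjk : j + k - j = k := by omega
      simp only [hjk]
    · rintro ⟨m, j⟩ hq
      rfl
  rw [step3, step1, step2]

lemma Svanish {n N : ℕ}
    (g : (Fin n → ℝ) → Fin n → Fin n → ℝ) (u : (Fin n → ℝ) → ℝ)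
    (Kc : ℕ → (Fin n → ℝ) × (Fin n → ℝ) → ℝ) (E : ℝ)
    (hg : ∀ i j, ContDiff ℝ (⊤ : ℕ∞) fun x => g x i j)
    (hu : ContDiff ℝ (⊤ : ℕ∞) u)
    (hune : ∀ x, u x ≠ 0)
    (hKc : ∀ j, ContDiff ℝ (⊤ : ℕ∞) (Kc j))
    (hKzero : ∀ j, N / 2 < j → Kc j = 0)
    (hKhom : ∀ j ≤ N / 2, ∀ (x p : Fin n → ℝ) (a : ℝ),
      Kc j (x, a • p) = a ^ (N - 2 * j) * Kc j (x, p))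
    (hKsym : ∀ z, pb (fun w => ∑ j ∈ range (N / 2 + 1), Kc j w)
      (fun w => (∑ i : Fin n, ∑ j : Fin n, g w.1 i j * w.2 i * w.2 j) + u w.1) z = 0) :
    ∀ z, ∑ j ∈ range (N / 2 + 1),
      (fun w => -(((∑ i : Fin n, ∑ k : Fin n, g w.1 i k * w.2 i * w.2 k) - E) / u w.1)) z ^ j
        * pb (Kc j)
          (fun w => -(((∑ i : Fin n, ∑ k : Fin n, g w.1 i k * w.2 i * w.2 k) - E) / u w.1)) z
      = 0 := by
  intro z
  obtain ⟨gr1, gr2⟩ := graded g u Kc hg hu hKc hKzero hKhom hKsym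
  set H0 : (Fin n → ℝ) × (Fin n → ℝ) → ℝ :=
    fun w => ∑ i : Fin n, ∑ j : Fin n, g w.1 i j * w.2 i * w.2 j with hH0
  set U : (Fin n → ℝ) × (Fin n → ℝ) → ℝ := fun w => u w.1 with hU
  set Q : (Fin n → ℝ) × (Fin n → ℝ) → ℝ := fun w => -((H0 w - E) / U w) with hQ
  have hsnd : ∀ i : Fin n, ContDiff ℝ (⊤ : ℕ∞) (fun w : (Fin n → ℝ) × (Fin n → ℝ) => w.2 i) :=
    fun i => ((ContinuousLinearMap.proj (R := ℝ) (φ := fun _ : Fin n => ℝ) i).comp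
      (ContinuousLinearMap.snd ℝ (Fin n → ℝ) (Fin n → ℝ))).contDiff
  have hH0c : ContDiff ℝ (⊤ : ℕ∞) H0 := by
    refine ContDiff.sum fun i _ => ContDiff.sum fun k _ => ?_
    exact (((hg i k).comp contDiff_fst).mul (hsnd i)).mul (hsnd k)
  have hH0d : Differentiable ℝ H0 := hH0c.differentiable (by simp)
  have hUd : Differentiable ℝ U := (hu.comp contDiff_fst).differentiable (by simp)
  have hUne : ∀ w : (Fin n → ℝ) × (Fin n → ℝ), U w ≠ 0 := fun w => hune w.1
  have hKd : ∀ j, Differentiable ℝ (Kc j) := fun j => (hKc j).differentiable (by simp)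
  have hQd : Differentiable ℝ Q := by
    have e : Q = fun w => -((H0 w - E) * (U w)⁻¹) := by
      rw [hQ]; funext w; rw [div_eq_mul_inv]
    rw [e]
    exact fun w => (((hH0d w).sub (differentiableAt_const E)).mul ((hUd w).inv (hUne w))).neg
  have hQU : (fun w => Q w * U w) = fun w => E - H0 w := by
    funext w
    rw [hQ]
    show -((H0 w - E) / U w) * U w = E - H0 w
    rw [neg_mul, div_mul_cancel₀ _ (hUne w)]
    ring
  have key : ∀ j, U z * pb (Kc j) Q z = -(pb (Kc j) H0 z) - Q z * pb (Kc j) U z := by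
    intro j
    have h1 : pb (Kc j) (fun w => Q w * U w) z
        = Q z * pb (Kc j) U z + U z * pb (Kc j) Q z := PBaux.pb_mul_right (hQd z) (hUd z)
    have h2 : pb (Kc j) (fun w => E - H0 w) z = - pb (Kc j) H0 z :=
      PBaux.pb_const_sub_right E (hH0d z)
    rw [hQU, h2] at h1
    linarith
  have hsum : U z * (∑ j ∈ range (N / 2 + 1), Q z ^ j * pb (Kc j) Q z)
      = ∑ j ∈ range (N / 2 + 1),
        (-(Q z ^ j * pb (Kc j) H0 z) - Q z ^ (j+1) * pb (Kc j) U z) := by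
    rw [Finset.mul_sum]
    refine Finset.sum_congr rfl fun j _ => ?_
    have := key j
    calc U z * (Q z ^ j * pb (Kc j) Q z) = Q z ^ j * (U z * pb (Kc j) Q z) := by ring
      _ = Q z ^ j * (-(pb (Kc j) H0 z) - Q z * pb (Kc j) U z) := by rw [this]
      _ = -(Q z ^ j * pb (Kc j) H0 z) - Q z ^ (j+1) * pb (Kc j) U z := by rw [pow_succ]; ring
  have hzero : ∑ j ∈ range (N / 2 + 1),
      (-(Q z ^ j * pb (Kc j) H0 z) - Q z ^ (j+1) * pb (Kc j) U z) = 0 := by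
    rw [Finset.sum_sub_distrib, Finset.sum_neg_distrib]
    have hA : ∑ j ∈ range (N / 2 + 1), Q z ^ j * pb (Kc j) H0 z
        = ∑ j ∈ range (N / 2), Q z ^ (j+1) * pb (Kc (j+1)) H0 z := by
      rw [Finset.sum_range_succ']
      rw [gr1 z]
      simp
    have hB : ∑ j ∈ range (N / 2 + 1), Q z ^ (j+1) * pb (Kc j) U z
        = - ∑ j ∈ range (N / 2 + 1), Q z ^ (j+1) * pb (Kc (j+1)) H0 z := by
      rw [← Finset.sum_neg_distrib]
      refine Finset.sum_congr rfl fun j _ => ?_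
      have := gr2 j z
      have : pb (Kc j) U z = - pb (Kc (j+1)) H0 z := by linarith
      rw [this]; ring
    have hC : ∑ j ∈ range (N / 2 + 1), Q z ^ (j+1) * pb (Kc (j+1)) H0 z
        = ∑ j ∈ range (N / 2), Q z ^ (j+1) * pb (Kc (j+1)) H0 z := by
      rw [Finset.sum_range_succ]
      have : Kc (N / 2 + 1) = 0 := hKzero _ (by omega)
      rw [this, PBaux.pb_zero_left', mul_zero, add_zero]
    rw [hA, hB, hC]
    ring
  have := hsum.trans hzero
  rcases mul_eq_zero.mp this with h | h
  · exact absurd h (hUne z)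
  · exact h

open PBaux in
lemma assemble {n : ℕ} (Q : (Fin n → ℝ) × (Fin n → ℝ) → ℝ)
    (Kc Lc : ℕ → (Fin n → ℝ) × (Fin n → ℝ) → ℝ) (JK JL : ℕ)
    (hQd : Differentiable ℝ Q)
    (hKd : ∀ j, Differentiable ℝ (Kc j)) (hLd : ∀ j, Differentiable ℝ (Lc j))
    (hKz : ∀ j, JK < j → Kc j = 0) (hLz : ∀ k, JL < k → Lc k = 0)
    (SK : ∀ z, ∑ j ∈ range (JK+1), Q z ^ j * pb (Kc j) Q z = 0)
    (SL : ∀ z, ∑ k ∈ range (JL+1), Q z ^ k * pb (Lc k) Q z = 0)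
    (z : (Fin n → ℝ) × (Fin n → ℝ)) :
    ∑ m ∈ range (JK + JL + 1), Q z ^ m * (∑ j ∈ range (m+1), pb (Kc j) (Lc (m-j)) z)
      = pb (fun w => ∑ j ∈ range (JK+1), Q w ^ j * Kc j w)
          (fun w => ∑ k ∈ range (JL+1), Q w ^ k * Lc k w) z := by
  have e1 : pb (fun w => ∑ j ∈ range (JK+1), Q w ^ j * Kc j w)
      (fun w => ∑ k ∈ range (JL+1), Q w ^ k * Lc k w) z
      = ∑ j ∈ range (JK+1), pb (fun w => Q w ^ j * Kc j w)
          (fun w => ∑ k ∈ range (JL+1), Q w ^ k * Lc k w) z :=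
    pb_sum_left (range (JK+1)) (fun j w => Q w ^ j * Kc j w)
      (fun j _ => ((hQd.pow j).mul (hKd j)) z)
  have e2 : ∀ j, pb (fun w => Q w ^ j * Kc j w)
      (fun w => ∑ k ∈ range (JL+1), Q w ^ k * Lc k w) z
      = ∑ k ∈ range (JL+1), pb (fun w => Q w ^ j * Kc j w)
          (fun w => Q w ^ k * Lc k w) z := fun j =>
    pb_sum_right (range (JL+1)) (fun k w => Q w ^ k * Lc k w)
      (fun k _ => ((hQd.pow k).mul (hLd k)) z)
  have e3 : ∀ j k, pb (fun w => Q w ^ j * Kc j w) (fun w => Q w ^ k * Lc k w) z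
      = Q z ^ (j + k) * pb (Kc j) (Lc k) z
        + (Q z ^ j * pb (Kc j) Q z) * ((k:ℝ) * Q z ^ (k-1) * Lc k z)
        - ((j:ℝ) * Q z ^ (j-1) * Kc j z) * (Q z ^ k * pb (Lc k) Q z) := by
    intro j k
    have h1 : pb (fun w => Q w ^ j * Kc j w) (fun w => Q w ^ k * Lc k w) z
        = Q z ^ j * pb (Kc j) (fun w => Q w ^ k * Lc k w) z
          + Kc j z * pb (fun w => Q w ^ j) (fun w => Q w ^ k * Lc k w) z :=
      pb_mul_left ((hQd.pow j) z) (hKd j z)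
    have h2 : pb (Kc j) (fun w => Q w ^ k * Lc k w) z
        = Q z ^ k * pb (Kc j) (Lc k) z + Lc k z * pb (Kc j) (fun w => Q w ^ k) z :=
      pb_mul_right ((hQd.pow k) z) (hLd k z)
    have h3 : pb (Kc j) (fun w => Q w ^ k) z = (k:ℝ) * Q z ^ (k-1) * pb (Kc j) Q z :=
      pb_pow_right k (hQd z)
    have h4 : pb (fun w => Q w ^ j) (fun w => Q w ^ k * Lc k w) z
        = (j:ℝ) * Q z ^ (j-1) * pb Q (fun w => Q w ^ k * Lc k w) z :=
      pb_pow_left j (hQd z)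
    have h5 : pb Q (fun w => Q w ^ k * Lc k w) z
        = Q z ^ k * pb Q (Lc k) z + Lc k z * pb Q (fun w => Q w ^ k) z :=
      pb_mul_right ((hQd.pow k) z) (hLd k z)
    have h6 : pb Q (fun w => Q w ^ k) z = (k:ℝ) * Q z ^ (k-1) * pb Q Q z :=
      pb_pow_right k (hQd z)
    have h7 : pb Q Q z = 0 := pb_self Q z
    have h8 : pb Q (Lc k) z = - pb (Lc k) Q z := pb_antisymm Q (Lc k) z
    rw [h1, h2, h3, h4, h5, h6, h7, h8, pow_add]
    ring
  rw [e1]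
  rw [Finset.sum_congr rfl fun j _ => e2 j]
  rw [Finset.sum_congr rfl fun j (_ : j ∈ range (JK+1)) =>
    Finset.sum_congr rfl fun k (_ : k ∈ range (JL+1)) => e3 j k]
  have split : ∑ j ∈ range (JK+1), ∑ k ∈ range (JL+1),
      (Q z ^ (j + k) * pb (Kc j) (Lc k) z
        + Q z ^ j * pb (Kc j) Q z * ((k:ℝ) * Q z ^ (k-1) * Lc k z)
        - (j:ℝ) * Q z ^ (j-1) * Kc j z * (Q z ^ k * pb (Lc k) Q z))
      = (∑ j ∈ range (JK+1), ∑ k ∈ range (JL+1), Q z ^ (j + k) * pb (Kc j) (Lc k) z)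
        + (∑ j ∈ range (JK+1), ∑ k ∈ range (JL+1),
            (Q z ^ j * pb (Kc j) Q z) * ((k:ℝ) * Q z ^ (k-1) * Lc k z))
        - (∑ j ∈ range (JK+1), ∑ k ∈ range (JL+1),
            ((j:ℝ) * Q z ^ (j-1) * Kc j z) * (Q z ^ k * pb (Lc k) Q z)) := by
    simp only [Finset.sum_add_distrib, Finset.sum_sub_distrib]
  have hB : (∑ j ∈ range (JK+1), ∑ k ∈ range (JL+1),
      (Q z ^ j * pb (Kc j) Q z) * ((k:ℝ) * Q z ^ (k-1) * Lc k z)) = 0 := by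
    rw [← Finset.sum_mul_sum (range (JK+1)) (range (JL+1))
      (fun j => Q z ^ j * pb (Kc j) Q z) (fun k => (k:ℝ) * Q z ^ (k-1) * Lc k z)]
    rw [SK z, zero_mul]
  have hC : (∑ j ∈ range (JK+1), ∑ k ∈ range (JL+1),
      ((j:ℝ) * Q z ^ (j-1) * Kc j z) * (Q z ^ k * pb (Lc k) Q z)) = 0 := by
    rw [← Finset.sum_mul_sum (range (JK+1)) (range (JL+1))
      (fun j => (j:ℝ) * Q z ^ (j-1) * Kc j z) (fun k => Q z ^ k * pb (Lc k) Q z)]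
    rw [SL z, mul_zero]
  have hA : ∑ m ∈ range (JK + JL + 1), Q z ^ m * (∑ j ∈ range (m+1), pb (Kc j) (Lc (m-j)) z)
      = ∑ j ∈ range (JK+1), ∑ k ∈ range (JL+1), Q z ^ (j + k) * pb (Kc j) (Lc k) z := by
    have lhs_eq : ∑ m ∈ range (JK + JL + 1), Q z ^ m * (∑ j ∈ range (m+1), pb (Kc j) (Lc (m-j)) z)
        = ∑ m ∈ range (JK + JL + 1), ∑ j ∈ range (m+1),
            Q z ^ (j + (m - j)) * pb (Kc j) (Lc (m-j)) z := by
      refine Finset.sum_congr rfl fun m _ => ?_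
      rw [Finset.mul_sum]
      refine Finset.sum_congr rfl fun j hj => ?_
      have : j + (m - j) = m := by have := mem_range.mp hj; omega
      rw [this]
    rw [lhs_eq]
    exact triangle_sum JK JL (fun j k => Q z ^ (j + k) * pb (Kc j) (Lc k) z)
      (fun j k hj => by
        show Q z ^ (j + k) * pb (Kc j) (Lc k) z = 0
        rw [hKz j hj, PBaux.pb_zero_left', mul_zero])
      (fun j k hk => by
        show Q z ^ (j + k) * pb (Kc j) (Lc k) z = 0
        rw [hLz k hk, PBaux.pb_zero_right', mul_zero])
  rw [split, hB, hC, hA]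
  ring

/-- The Jacobi transform respects Poisson brackets: the transform of {K, L} (whose graded
components are Σ_{j+k=m} {K_{N−2j}, L_{M−2k}}) equals {K̂, L̂}. -/
theorem stmt6 {n N M : ℕ}
    (g : (Fin n → ℝ) → Fin n → Fin n → ℝ)
    (u : (Fin n → ℝ) → ℝ)
    (Kc Lc : ℕ → (Fin n → ℝ) × (Fin n → ℝ) → ℝ)
    (E : ℝ)
    (hg : ∀ i j, ContDiff ℝ (⊤ : ℕ∞) fun x => g x i j)
    (hu : ContDiff ℝ (⊤ : ℕ∞) u)
    (hune : ∀ x, u x ≠ 0)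
    (hKc : ∀ j, ContDiff ℝ (⊤ : ℕ∞) (Kc j)) (hLc : ∀ j, ContDiff ℝ (⊤ : ℕ∞) (Lc j))
    (hKzero : ∀ j, N / 2 < j → Kc j = 0)
    (hLzero : ∀ j, M / 2 < j → Lc j = 0)
    (hKhom : ∀ j ≤ N / 2, ∀ (x p : Fin n → ℝ) (a : ℝ),
      Kc j (x, a • p) = a ^ (N - 2 * j) * Kc j (x, p))
    (hLhom : ∀ j ≤ M / 2, ∀ (x p : Fin n → ℝ) (a : ℝ),
      Lc j (x, a • p) = a ^ (M - 2 * j) * Lc j (x, p))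
    (hKsym : ∀ z, pb (fun w => ∑ j ∈ range (N / 2 + 1), Kc j w)
      (fun w => (∑ i : Fin n, ∑ j : Fin n, g w.1 i j * w.2 i * w.2 j) + u w.1) z = 0)
    (hLsym : ∀ z, pb (fun w => ∑ j ∈ range (M / 2 + 1), Lc j w)
      (fun w => (∑ i : Fin n, ∑ j : Fin n, g w.1 i j * w.2 i * w.2 j) + u w.1) z = 0) :
    ∀ z : (Fin n → ℝ) × (Fin n → ℝ),
      (∑ m ∈ range (N / 2 + M / 2 + 1),
        (-(((∑ i : Fin n, ∑ k : Fin n, g z.1 i k * z.2 i * z.2 k) - E) / u z.1)) ^ m *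
          (∑ j ∈ range (m + 1), pb (Kc j) (Lc (m - j)) z))
      = pb
          (fun w => ∑ j ∈ range (N / 2 + 1),
            (-(((∑ i : Fin n, ∑ k : Fin n, g w.1 i k * w.2 i * w.2 k) - E) / u w.1)) ^ j * Kc j w)
          (fun w => ∑ k ∈ range (M / 2 + 1),
            (-(((∑ i : Fin n, ∑ l : Fin n, g w.1 i l * w.2 i * w.2 l) - E) / u w.1)) ^ k * Lc k w)
          z := by
  intro z
  have hsnd : ∀ i : Fin n, ContDiff ℝ (⊤ : ℕ∞) (fun w : (Fin n → ℝ) × (Fin n → ℝ) => w.2 i) :=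
    fun i => ((ContinuousLinearMap.proj (R := ℝ) (φ := fun _ : Fin n => ℝ) i).comp
      (ContinuousLinearMap.snd ℝ (Fin n → ℝ) (Fin n → ℝ))).contDiff
  have hH0d : Differentiable ℝ (fun w : (Fin n → ℝ) × (Fin n → ℝ) =>
      ∑ i : Fin n, ∑ k : Fin n, g w.1 i k * w.2 i * w.2 k) := by
    refine ((ContDiff.sum fun i _ => ContDiff.sum fun k _ => ?_ : ContDiff ℝ (⊤ : ℕ∞) _)).differentiable (by simp)
    exact (((hg i k).comp contDiff_fst).mul (hsnd i)).mul (hsnd k)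
  have hUd : Differentiable ℝ (fun w : (Fin n → ℝ) × (Fin n → ℝ) => u w.1) :=
    (hu.comp contDiff_fst).differentiable (by simp)
  have hQd : Differentiable ℝ (fun w : (Fin n → ℝ) × (Fin n → ℝ) =>
      -(((∑ i : Fin n, ∑ k : Fin n, g w.1 i k * w.2 i * w.2 k) - E) / u w.1)) := by
    have e : (fun w : (Fin n → ℝ) × (Fin n → ℝ) =>
        -(((∑ i : Fin n, ∑ k : Fin n, g w.1 i k * w.2 i * w.2 k) - E) / u w.1))
        = fun w => -(((∑ i : Fin n, ∑ k : Fin n, g w.1 i k * w.2 i * w.2 k) - E) * (u w.1)⁻¹) := by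
      funext w; rw [div_eq_mul_inv]
    rw [e]
    exact fun w =>
      (((hH0d w).sub (differentiableAt_const E)).mul ((hUd w).inv (hune w.1))).neg
  have SK := Svanish g u Kc E hg hu hune hKc hKzero hKhom hKsym
  have SL := Svanish g u Lc E hg hu hune hLc hLzero hLhom hLsym
  exact assemble
    (fun w : (Fin n → ℝ) × (Fin n → ℝ) =>
      -(((∑ i : Fin n, ∑ k : Fin n, g w.1 i k * w.2 i * w.2 k) - E) / u w.1))
    Kc Lc (N / 2) (M / 2) hQd
    (fun j => (hKc j).differentiable (by simp)) (fun j => (hLc j).differentiable (by simp))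
    hKzero hLzero SK SL z
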